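/- arXiv:2306.03479 — 4 statements merged into one kernel-verified Lean document; each statement's English description precedes it below -/
import Mathlib

section
/- Maximizer of the tree variational problem for γ ≥ 1: let T be a finite tree with at least one edge and let γ ≥ 1. Then the supremum, over all vectors u = (u_i)_{i∈V(T)} with u_i ≥ 0 and Σ_{i∈V(T)} u_i = 1, of Σ_{{i,j}∈E(T)} u_i^γ u_j^γ equals 4^{−γ}, and this value is attained by any vector with u_i = u_j = 1/2 for some pair of adjacent vertices i, j (and all other coordinates zero). Moreover, if γ > 1, these are the only maximizers. -/
open MeasureTheory ProbabilityTheory Filter Real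
open scoped ENNReal NNReal

noncomputable section

instance matrixMeasurableSpace {m n α : Type*} [MeasurableSpace α] :
    MeasurableSpace (Matrix m n α) :=
  inferInstanceAs (MeasurableSpace (m → n → α))

/-- The largest eigenvalue of a real square matrix: the supremum of its real eigenvalues. -/
def lam1 {n : ℕ} (M : Matrix (Fin n) (Fin n) ℝ) : ℝ :=
  sSup {r : ℝ | ∃ v : Fin n → ℝ, v ≠ 0 ∧ M.mulVec v = r • v}

open Classical in
/-- The sum of `f i j` over the undirected edges `{i, j}` of `G`
(assuming `f` is symmetric, each undirected edge is counted once). -/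
def edgeSum {m : ℕ} (G : SimpleGraph (Fin m)) (f : Fin m → Fin m → ℝ) : ℝ :=
  (∑ i, ∑ j, if G.Adj i j then f i j else 0) / 2

/-- The maximum degree of `G` is at most `d`. -/
def MaxDegLE {m : ℕ} (G : SimpleGraph (Fin m)) (d : ℕ) : Prop :=
  ∀ v, {w | G.Adj v w}.ncard ≤ d


section AuxTreeVar

open SimpleGraph Real

private lemma tree_two_coloring {m : ℕ} {T : SimpleGraph (Fin m)} (hT : T.IsTree) :
    ∃ f : Fin m → Bool, ∀ ⦃i j⦄, T.Adj i j → f i ≠ f j := by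
  classical
  have hconn : T.Connected := hT.isConnected
  obtain ⟨r⟩ := hconn.nonempty
  refine ⟨fun v => decide (T.dist v r % 2 = 1), ?_⟩
  intro i j hadj hf
  simp only [decide_eq_decide] at hf
  obtain ⟨p, hp, hpl⟩ := hconn.exists_path_of_dist i r
  obtain ⟨q, hq, hql⟩ := hconn.exists_path_of_dist j r
  have h1 : T.dist j r ≤ T.dist i r + 1 := by
    simpa [hpl] using T.dist_le (Walk.cons hadj.symm p)
  have h2 : T.dist i r ≤ T.dist j r + 1 := by
    simpa [hql] using T.dist_le (Walk.cons hadj q)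
  have heq : T.dist i r = T.dist j r := by omega
  by_cases hjp : j ∈ p.support
  · have h3 : T.dist j r ≤ (p.dropUntil j hjp).length := T.dist_le _
    have h4 : (p.takeUntil j hjp).length + (p.dropUntil j hjp).length = p.length := by
      rw [← Walk.length_append, Walk.take_spec]
    have h5 : (p.takeUntil j hjp).length ≠ 0 := fun h0 =>
      hadj.ne (Walk.eq_of_length_eq_zero h0)
    omega
  · have hw : (Walk.cons hadj.symm p).IsPath := hp.cons hjp
    have huniq := hT.IsAcyclic.path_unique ⟨Walk.cons hadj.symm p, hw⟩ ⟨q, hq⟩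
    have hlen := congrArg (fun P : T.Path j r => P.1.length) huniq
    simp only [Walk.length_cons] at hlen
    omega

open Classical in
private lemma sum_adj_mul_le_half {m : ℕ} {T : SimpleGraph (Fin m)} (hT : T.IsTree)
    {u : Fin m → ℝ} (hu : ∀ i, 0 ≤ u i) (hsum : ∑ i, u i = 1) :
    ∑ i, ∑ j, (if T.Adj i j then u i * u j else 0) ≤ 1 / 2 := by
  classical
  obtain ⟨f, hf⟩ := tree_two_coloring hT
  set g : Fin m → ℝ := fun i => if f i then u i else 0 with hg
  set h : Fin m → ℝ := fun i => if f i then 0 else u i with hh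
  have hgnn : ∀ i, 0 ≤ g i := fun i => by by_cases hfi : f i <;> simp [hg, hfi, hu i]
  have hhnn : ∀ i, 0 ≤ h i := fun i => by by_cases hfi : f i <;> simp [hh, hfi, hu i]
  have step1 : ∑ i, ∑ j, (if T.Adj i j then u i * u j else 0)
      ≤ ∑ i, ∑ j, (g i * h j + h i * g j) := by
    refine Finset.sum_le_sum fun i _ => Finset.sum_le_sum fun j _ => ?_
    by_cases hadj : T.Adj i j
    · have hne := hf hadj
      by_cases hfi : f i
      · have hfj : f j = false := by
          cases hfj : f j
          · rfl
          · exact absurd (by rw [hfi, hfj]) hne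
        simp [hadj, hg, hh, hfi, hfj]
      · have hfj : f j = true := by
          cases hfj : f j
          · simp only [Bool.not_eq_true] at hfi
            exact absurd (by rw [hfi, hfj]) hne
          · rfl
        simp [hadj, hg, hh, hfi, hfj]
    · simp only [if_neg hadj]
      exact add_nonneg (mul_nonneg (hgnn i) (hhnn j)) (mul_nonneg (hhnn i) (hgnn j))
  have step2 : ∑ i, ∑ j, (g i * h j + h i * g j)
      = (∑ i, g i) * (∑ j, h j) + (∑ i, h i) * (∑ j, g j) := by
    calc ∑ i, ∑ j, (g i * h j + h i * g j)
        = ∑ i, (∑ j, g i * h j + ∑ j, h i * g j) :=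
          Finset.sum_congr rfl fun i _ => Finset.sum_add_distrib
      _ = (∑ i, ∑ j, g i * h j) + (∑ i, ∑ j, h i * g j) := Finset.sum_add_distrib
      _ = (∑ i, g i) * (∑ j, h j) + (∑ i, h i) * (∑ j, g j) := by
          rw [← Finset.sum_mul_sum, ← Finset.sum_mul_sum]
  have hAB : (∑ i, g i) + (∑ i, h i) = 1 := by
    rw [← Finset.sum_add_distrib, ← hsum]
    exact Finset.sum_congr rfl fun i _ => by by_cases hfi : f i <;> simp [hg, hh, hfi]
  have hA : 0 ≤ ∑ i, g i := Finset.sum_nonneg fun i _ => hgnn i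
  have hB : 0 ≤ ∑ i, h i := Finset.sum_nonneg fun i _ => hhnn i
  nlinarith [sq_nonneg ((∑ i, g i) - (∑ i, h i)), step1, step2]

open Classical in
private lemma pair_le_sum {m : ℕ} {T : SimpleGraph (Fin m)} {u : Fin m → ℝ}
    (hu : ∀ i, 0 ≤ u i) {i j : Fin m} (hadj : T.Adj i j) :
    2 * (u i * u j) ≤ ∑ a, ∑ b, (if T.Adj a b then u a * u b else 0) := by
  classical
  have hnn : ∀ a b : Fin m, 0 ≤ (if T.Adj a b then u a * u b else 0) := fun a b => by
    by_cases hab : T.Adj a b <;> simp [hab, mul_nonneg (hu a) (hu b)]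
  have hnn' : ∀ a, 0 ≤ ∑ b, (if T.Adj a b then u a * u b else 0) :=
    fun a => Finset.sum_nonneg fun b _ => hnn a b
  have hterm : ∀ a b : Fin m, T.Adj a b →
      u a * u b ≤ ∑ b', (if T.Adj a b' then u a * u b' else 0) := by
    intro a b hab
    simpa [hab] using Finset.single_le_sum (f := fun b' => if T.Adj a b' then u a * u b' else 0)
      (fun b' _ => hnn a b') (Finset.mem_univ b)
  have hij := hterm i j hadj
  have hji := hterm j i hadj.symm
  rw [mul_comm (u j) (u i)] at hji
  have hpairs : (∑ b', if T.Adj i b' then u i * u b' else 0)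
      + (∑ b', if T.Adj j b' then u j * u b' else 0)
      ≤ ∑ a, ∑ b, (if T.Adj a b then u a * u b else 0) := by
    have hs := Finset.sum_le_sum_of_subset_of_nonneg
      (Finset.subset_univ ({i, j} : Finset (Fin m)))
      (fun a _ _ => hnn' a)
    rwa [Finset.sum_pair hadj.ne] at hs
  linarith

private lemma quarter_rpow (γ : ℝ) : ((1 : ℝ)/4) ^ γ = (4 : ℝ) ^ (-γ) := by
  rw [Real.rpow_neg (by norm_num : (0:ℝ) ≤ 4), one_div,
    Real.inv_rpow (by norm_num : (0:ℝ) ≤ 4)]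

private lemma rpow_split {γ : ℝ} (hγ0 : γ ≠ 0) {x : ℝ} (hx : 0 ≤ x) :
    x ^ γ = x * x ^ (γ - 1) := by
  have h : x ^ (1 + (γ - 1)) = x ^ (1:ℝ) * x ^ (γ - 1) :=
    Real.rpow_add' hx (by intro h; exact hγ0 (by linarith))
  rw [Real.rpow_one] at h
  rw [show γ = 1 + (γ - 1) by ring] at h ⊢
  convert h using 3 <;> ring

private lemma half_half {a b : ℝ} (ha : 0 ≤ a) (hb : 0 ≤ b) (hab : a * b = 1/4) (hle : a + b ≤ 1) :
    a = 1/2 ∧ b = 1/2 := by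
  have h1 : a + b = 1 := by nlinarith [sq_nonneg (a - b)]
  have h2 : a = b := by nlinarith [sq_nonneg (a - b)]
  constructor <;> linarith

private lemma main_bound {γ : ℝ} (hγ : 1 ≤ γ) {m : ℕ} {T : SimpleGraph (Fin m)} (hT : T.IsTree)
    {u : Fin m → ℝ} (hu : ∀ i, 0 ≤ u i) (hsum : ∑ i, u i = 1) :
    edgeSum T (fun i j => u i ^ γ * u j ^ γ) ≤ (4:ℝ) ^ (-γ) ∧
    (1 < γ → edgeSum T (fun i j => u i ^ γ * u j ^ γ) = (4:ℝ) ^ (-γ) →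
      ∃ i j, T.Adj i j ∧ u i = 1/2 ∧ u j = 1/2 ∧ ∀ k, k ≠ i → k ≠ j → u k = 0) := by
  classical
  have hγpos : (0:ℝ) < γ := by linarith
  have hγ0 : γ ≠ 0 := ne_of_gt hγpos
  have hγ1 : (0:ℝ) ≤ γ - 1 := by linarith
  set S2 : ℝ := ∑ i, ∑ j, (if T.Adj i j then u i * u j else 0) with hS2def
  have hnn : ∀ a b : Fin m, 0 ≤ (if T.Adj a b then u a * u b else 0) := fun a b => by
    by_cases hab : T.Adj a b <;> simp [hab, mul_nonneg (hu a) (hu b)]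
  have hS2nn : 0 ≤ S2 :=
    Finset.sum_nonneg fun a _ => Finset.sum_nonneg fun b _ => hnn a b
  have hS2le : S2 ≤ 1/2 := sum_adj_mul_le_half hT hu hsum
  set s : ℝ := S2 / 2 with hsdef
  have hsnn : 0 ≤ s := by positivity
  have hs14 : s ≤ 1/4 := by rw [hsdef]; linarith
  have hple : ∀ ⦃i j : Fin m⦄, T.Adj i j → u i * u j ≤ s := by
    intro i j hadj
    have := pair_le_sum hu hadj
    rw [hsdef]; linarith
  -- rewrite edgeSum
  have hEdge : edgeSum T (fun i j => u i ^ γ * u j ^ γ)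
      = (∑ i, ∑ j, (if T.Adj i j then (u i * u j) ^ γ else 0)) / 2 := by
    unfold edgeSum
    congr 1
    refine Finset.sum_congr rfl fun i _ => Finset.sum_congr rfl fun j _ => ?_
    by_cases hadj : T.Adj i j
    · simp [hadj, Real.mul_rpow (hu i) (hu j)]
    · simp [hadj]
  set D : ℝ := ∑ i, ∑ j, (if T.Adj i j then (u i * u j) ^ γ else 0) with hDdef
  have hDterm : ∀ i j : Fin m, (if T.Adj i j then (u i * u j) ^ γ else 0)
      ≤ (if T.Adj i j then (u i * u j) * s ^ (γ - 1) else 0) := by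
    intro i j
    by_cases hadj : T.Adj i j
    · simp only [if_pos hadj]
      have hpnn : 0 ≤ u i * u j := mul_nonneg (hu i) (hu j)
      rw [rpow_split hγ0 hpnn]
      exact mul_le_mul_of_nonneg_left (Real.rpow_le_rpow hpnn (hple hadj) hγ1) hpnn
    · simp [hadj]
  have hRHS : ∑ i, ∑ j, (if T.Adj i j then (u i * u j) * s ^ (γ - 1) else 0)
      = 2 * s ^ γ := by
    have h1 : ∀ i j : Fin m, (if T.Adj i j then (u i * u j) * s ^ (γ - 1) else 0)
        = (if T.Adj i j then u i * u j else 0) * s ^ (γ - 1) := by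
      intro i j; by_cases hadj : T.Adj i j <;> simp [hadj]
    calc ∑ i, ∑ j, (if T.Adj i j then (u i * u j) * s ^ (γ - 1) else 0)
        = ∑ i, ∑ j, (if T.Adj i j then u i * u j else 0) * s ^ (γ - 1) := by
          exact Finset.sum_congr rfl fun i _ => Finset.sum_congr rfl fun j _ => h1 i j
      _ = S2 * s ^ (γ - 1) := by
          rw [hS2def, Finset.sum_mul]
          exact Finset.sum_congr rfl fun i _ => (Finset.sum_mul _ _ _).symm
      _ = 2 * s ^ γ := by
          rw [rpow_split hγ0 hsnn, hsdef]; ring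
  have hD_le : D ≤ 2 * s ^ γ := by
    rw [← hRHS]
    exact Finset.sum_le_sum fun i _ => Finset.sum_le_sum fun j _ => hDterm i j
  have hsγ_le : s ^ γ ≤ ((1:ℝ)/4) ^ γ := Real.rpow_le_rpow hsnn hs14 (le_of_lt hγpos)
  constructor
  · rw [hEdge, ← quarter_rpow]
    have : D ≤ 2 * ((1:ℝ)/4) ^ γ := by linarith
    linarith
  · intro hγ' hEq
    rw [hEdge] at hEq
    have hD : D = 2 * (4:ℝ) ^ (-γ) := by linarith
    have hq : ((1:ℝ)/4) ^ γ = (4:ℝ)^(-γ) := quarter_rpow γ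
    have hsγ : s ^ γ = ((1:ℝ)/4) ^ γ := by
      refine le_antisymm hsγ_le ?_
      rw [hq]; linarith
    have hs14' : s = 1/4 := by
      by_contra hne
      have hlt : s < 1/4 := lt_of_le_of_ne hs14 hne
      have := Real.rpow_lt_rpow hsnn hlt hγpos
      rw [hsγ] at this
      exact lt_irrefl _ this
    -- equality of sums
    have hDeq : D = ∑ i, ∑ j, (if T.Adj i j then (u i * u j) * s ^ (γ - 1) else 0) := by
      rw [hRHS]; rw [hD, ← hq, ← hsγ]
    have hDeq' : (∑ i, ∑ j, (if T.Adj i j then (u i * u j) ^ γ else 0))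
        = ∑ i, ∑ j, (if T.Adj i j then (u i * u j) * s ^ (γ - 1) else 0) := by
      rw [← hDdef]; exact hDeq
    have houter := (Finset.sum_eq_sum_iff_of_le (s := Finset.univ)
      (fun i _ => Finset.sum_le_sum fun j _ => hDterm i j)).mp hDeq'
    have hterm_eq : ∀ i j : Fin m, T.Adj i j →
        (u i * u j) ^ γ = (u i * u j) * s ^ (γ - 1) := by
      intro i j hadj
      have hin := (Finset.sum_eq_sum_iff_of_le (s := Finset.univ)
        (fun j _ => hDterm i j)).mp (houter i (Finset.mem_univ i))
      simpa [hadj] using hin j (Finset.mem_univ j)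
    -- there is an edge with positive product
    have hDpos : 0 < D := by
      rw [hD]; positivity
    have hex : ∃ i j, T.Adj i j ∧ 0 < u i * u j := by
      by_contra hno
      push_neg at hno
      have hz : D = 0 := by
        rw [hDdef]
        refine Finset.sum_eq_zero fun i _ => Finset.sum_eq_zero fun j _ => ?_
        by_cases hadj : T.Adj i j
        · have h0 : u i * u j = 0 := le_antisymm (hno i j hadj) (mul_nonneg (hu i) (hu j))
          simp [hadj, h0, Real.zero_rpow hγ0]
        · simp [hadj]
      rw [hz] at hDpos; exact lt_irrefl _ hDpos
    obtain ⟨i, j, hadj, hPpos⟩ := hex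
    have hPle : u i * u j ≤ s := hple hadj
    have hPeq : u i * u j = s := by
      by_contra hne
      have hlt : u i * u j < s := lt_of_le_of_ne hPle hne
      have hstrict := Real.rpow_lt_rpow (le_of_lt hPpos) hlt (by linarith : (0:ℝ) < γ - 1)
      have h1 := hterm_eq i j hadj
      rw [rpow_split hγ0 (le_of_lt hPpos)] at h1
      have h2 : (u i * u j) ^ (γ - 1) = s ^ (γ - 1) :=
        mul_left_cancel₀ (ne_of_gt hPpos) h1
      rw [h2] at hstrict; exact lt_irrefl _ hstrict
    have hprod : u i * u j = 1/4 := by rw [hPeq, hs14']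
    have hij_le : u i + u j ≤ 1 := by
      have hs' := Finset.sum_le_sum_of_subset_of_nonneg
        (Finset.subset_univ ({i, j} : Finset (Fin m))) (fun a _ _ => hu a)
      rw [Finset.sum_pair hadj.ne, hsum] at hs'
      exact hs'
    obtain ⟨hui, huj⟩ := half_half (hu i) (hu j) hprod hij_le
    refine ⟨i, j, hadj, hui, huj, ?_⟩
    intro k hki hkj
    have hrest : ∑ a ∈ Finset.univ \ ({i, j} : Finset (Fin m)), u a = 0 := by
      have h2 := Finset.sum_sdiff (Finset.subset_univ ({i, j} : Finset (Fin m))) (f := u)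
      rw [Finset.sum_pair hadj.ne, hsum, hui, huj] at h2
      linarith
    have hmem : k ∈ Finset.univ \ ({i, j} : Finset (Fin m)) := by
      simp [hki, hkj]
    exact (Finset.sum_eq_zero_iff_of_nonneg (fun a _ => hu a)).mp hrest k hmem

private lemma indicator_sum {m : ℕ} {i j : Fin m} (hne : i ≠ j) :
    ∑ a, (if a = i ∨ a = j then (1:ℝ)/2 else 0) = 1 := by
  classical
  have : ∀ a : Fin m, (if a = i ∨ a = j then (1:ℝ)/2 else 0)
      = (if a = i then (1:ℝ)/2 else 0) + (if a = j then (1:ℝ)/2 else 0) := by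
    intro a
    by_cases hai : a = i
    · subst hai
      simp [hne]
    · by_cases haj : a = j <;> simp [hai, haj, Ne.symm hne]
  rw [Finset.sum_congr rfl fun a _ => this a, Finset.sum_add_distrib]
  simp
  norm_num

private lemma attain {γ : ℝ} (hγ : 1 ≤ γ) {m : ℕ} (T : SimpleGraph (Fin m)) {i j : Fin m}
    (hadj : T.Adj i j) :
    edgeSum T (fun a b => (if a = i ∨ a = j then (1:ℝ)/2 else 0) ^ γ *
      (if b = i ∨ b = j then (1:ℝ)/2 else 0) ^ γ) = (4:ℝ) ^ (-γ) := by
  classical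
  have hγ0 : γ ≠ 0 := by intro h; rw [h] at hγ; norm_num at hγ
  have hne : i ≠ j := hadj.ne
  set c : ℝ := ((1:ℝ)/2) ^ γ * ((1:ℝ)/2) ^ γ with hc
  have key : ∀ a b : Fin m,
      (if T.Adj a b then (if a = i ∨ a = j then (1:ℝ)/2 else 0) ^ γ *
        (if b = i ∨ b = j then (1:ℝ)/2 else 0) ^ γ else 0)
      = (if a = i ∧ b = j then c else 0) + (if a = j ∧ b = i then c else 0) := by
    intro a b
    by_cases h1 : a = i ∧ b = j
    · obtain ⟨rfl, rfl⟩ := h1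
      simp [hadj, hne, c]
    · by_cases h2 : a = j ∧ b = i
      · obtain ⟨rfl, rfl⟩ := h2
        simp [hadj.symm, hne.symm, c]
      · rw [if_neg h1, if_neg h2, add_zero]
        by_cases hadj' : T.Adj a b
        · rw [if_pos hadj']
          by_cases hai : a = i ∨ a = j
          · by_cases hbi : b = i ∨ b = j
            · exfalso
              rcases hai with rfl | rfl <;> rcases hbi with rfl | rfl
              · exact hadj'.ne rfl
              · exact h1 ⟨rfl, rfl⟩
              · exact h2 ⟨rfl, rfl⟩
              · exact hadj'.ne rfl
            · rw [if_neg hbi, Real.zero_rpow hγ0, mul_zero]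
          · rw [if_neg hai, Real.zero_rpow hγ0, zero_mul]
        · rw [if_neg hadj']
  unfold edgeSum
  rw [Finset.sum_congr rfl fun a _ => Finset.sum_congr rfl fun b _ => key a b]
  have hsplit : ∀ a : Fin m, ∑ b, ((if a = i ∧ b = j then c else 0)
      + (if a = j ∧ b = i then c else 0))
      = (if a = i then c else 0) + (if a = j then c else 0) := by
    intro a
    rw [Finset.sum_add_distrib]
    congr 1
    · by_cases hai : a = i
      · simp [hai]
      · simp [hai]
    · by_cases haj : a = j
      · simp [haj]
      · simp [haj]
  rw [Finset.sum_congr rfl fun a _ => hsplit a, Finset.sum_add_distrib]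
  simp only [Finset.sum_ite_eq', Finset.mem_univ, if_pos]
  have hcc : c = (4:ℝ) ^ (-γ) := by
    rw [hc, ← Real.mul_rpow (by norm_num) (by norm_num), ← quarter_rpow γ]
    norm_num
  rw [hcc]
  ring

end AuxTreeVar

/-- **Maximizer of the tree variational problem for `γ ≥ 1`**: for a finite tree `T` with at
least one edge, the supremum of `Σ_{{i,j}∈E(T)} u_i^γ u_j^γ` over nonnegative `ℓ¹`-normalized
vectors equals `4^(-γ)`; it is attained at any vector putting mass `1/2, 1/2` on two adjacent
vertices, and for `γ > 1` those are the only maximizers. -/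
theorem tree_variational_maximizer
    (γ : ℝ) (hγ : 1 ≤ γ) (m : ℕ) (T : SimpleGraph (Fin m))
    (hT : T.IsTree) (hE : ∃ i j, T.Adj i j) :
    IsGreatest {x : ℝ | ∃ u : Fin m → ℝ, (∀ i, 0 ≤ u i) ∧ (∑ i, u i) = 1 ∧
        x = edgeSum T (fun i j => u i ^ γ * u j ^ γ)} ((4 : ℝ) ^ (-γ)) ∧
    (∀ i j : Fin m, T.Adj i j →
      edgeSum T (fun a b =>
        (if a = i ∨ a = j then (1 : ℝ) / 2 else 0) ^ γ *
        (if b = i ∨ b = j then (1 : ℝ) / 2 else 0) ^ γ) = (4 : ℝ) ^ (-γ)) ∧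
    (1 < γ → ∀ u : Fin m → ℝ, (∀ i, 0 ≤ u i) → (∑ i, u i) = 1 →
      edgeSum T (fun i j => u i ^ γ * u j ^ γ) = (4 : ℝ) ^ (-γ) →
      ∃ i j, T.Adj i j ∧ u i = 1 / 2 ∧ u j = 1 / 2 ∧
        ∀ k, k ≠ i → k ≠ j → u k = 0) := by
  classical
  obtain ⟨i0, j0, hadj0⟩ := hE
  refine ⟨⟨?_, ?_⟩, ?_, ?_⟩
  · exact ⟨fun a => if a = i0 ∨ a = j0 then (1:ℝ)/2 else 0,
      fun a => by by_cases h : a = i0 ∨ a = j0 <;> simp [h],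
      indicator_sum hadj0.ne, (attain hγ T hadj0).symm⟩
  · rintro x ⟨u, hu, hsum, rfl⟩
    exact (main_bound hγ hT hu hsum).1
  · intro i j hadj
    exact attain hγ T hadj
  · intro hγ' u hu hsum hEq
    exact (main_bound hγ hT hu hsum).2 hγ' hEq
end
end

section
/- Structure of near-maximizers of the tree variational problem: let γ > 1. There exists a constant c = c(γ) > 0 such that the following holds: for every sufficiently small ε > 0 (depending only on γ), for every finite tree T and every vector u = (u_i)_{i∈V(T)} with u_i ≥ 0 and Σ_{i∈V(T)} u_i = 1 satisfying (2·Σ_{{i,j}∈E(T)} u_i^γ u_j^γ)^{1/(2γ)} ≥ (1−ε)·2^{1/(2γ)−1}, there exist vertices i₀ and j₀ connected by an edge of T such that u_{i₀} ≥ 1/2 − c·√ε and u_{j₀} ≥ 1/2 − c·√ε. -/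
open MeasureTheory ProbabilityTheory Filter Real
open scoped ENNReal NNReal

noncomputable section

open Finset

/-!
A tree is bipartite, so for a probability vector `u` the sum of `u i * u j` over ordered adjacent
pairs is at most `1 / 2`. If `P` is the largest product `u i * u j` over an edge, then
`(u i * u j) ^ γ ≤ P ^ (γ - 1) * (u i * u j)` on every edge, so the functional is at most
`(P ^ (γ - 1) / 2) ^ (1 / (2γ))`, and near-optimality forces `(1 - ε) ^ (2γ) ≤ (4P) ^ (γ - 1)`, i.e.
`4P ≥ 1 - 2γε / (γ - 1)` by Bernoulli's inequality. Two numbers with sum at most `1` and product at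
least `(1 - δ) / 4` both lie within `√δ / 2` of `1 / 2`.
-/

theorem rpow_le_rpow_sub_one_mul {x p γ : ℝ} (hx : 0 ≤ x) (hxp : x ≤ p) (hγ : 1 ≤ γ) :
    x ^ γ ≤ p ^ (γ - 1) * x := by
  calc x ^ γ = x ^ (γ - 1) * x ^ (1 : ℝ) := by
        rw [← rpow_add' hx (by linarith)]; ring_nf
    _ ≤ p ^ (γ - 1) * x := by
        rw [rpow_one]; gcongr

theorem rpow_le_four_mul_rpow_of_le_rpow {γ a P s : ℝ} (hγ : 0 < γ) (ha : 0 ≤ a) (hP : 0 ≤ P)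
    (hs : 0 ≤ s) (hsP : s ≤ P ^ (γ - 1) / 2)
    (h : a * (2 : ℝ) ^ (1 / (2 * γ) - 1) ≤ s ^ (1 / (2 * γ))) :
    a ^ (2 * γ) ≤ (4 * P) ^ (γ - 1) := by
  rw [one_div, le_rpow_inv_iff_of_pos (by positivity) hs (by positivity),
    mul_rpow ha (by positivity), ← rpow_mul zero_le_two,
    show ((2 * γ)⁻¹ - 1) * (2 * γ) = 1 - 2 * γ by field_simp] at h
  have hcancel : (2 : ℝ) ^ (1 - 2 * γ) * 2 ^ (2 * γ - 1) = 1 := by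
    rw [← rpow_add two_pos]; norm_num
  have hfour : (4 * P) ^ (γ - 1) = P ^ (γ - 1) / 2 * 2 ^ (2 * γ - 1) := by
    rw [mul_rpow (by norm_num) hP, show (4 : ℝ) = 2 ^ (2 : ℝ) by norm_num, ← rpow_mul zero_le_two,
      show 2 * γ - 1 = 2 * (γ - 1) + 1 by ring, rpow_add_one two_ne_zero]
    ring
  calc a ^ (2 * γ) = a ^ (2 * γ) * 2 ^ (1 - 2 * γ) * 2 ^ (2 * γ - 1) := by
        rw [mul_assoc, hcancel, mul_one]
    _ ≤ P ^ (γ - 1) / 2 * 2 ^ (2 * γ - 1) := by gcongr; linarith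
    _ = (4 * P) ^ (γ - 1) := hfour.symm

/-- Take the `(γ - 1)`-th root and apply Bernoulli's inequality to `(1 - ε) ^ (2γ / (γ - 1))`. -/
theorem one_sub_mul_le_of_rpow_le_rpow {γ ε Q : ℝ} (hγ : 1 < γ) (hε : ε ≤ 1) (hQ : 0 ≤ Q)
    (h : (1 - ε) ^ (2 * γ) ≤ Q ^ (γ - 1)) :
    1 - 2 * γ / (γ - 1) * ε ≤ Q := by
  have hγ1 : 0 < γ - 1 := by linarith
  have hbernoulli := one_add_mul_self_le_rpow_one_add (s := -ε) (by linarith)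
    (p := 2 * γ / (γ - 1)) (by rw [le_div_iff₀ hγ1]; linarith)
  rw [← rpow_inv_le_iff_of_pos (by positivity) hQ hγ1, ← rpow_mul (by linarith),
    ← div_eq_mul_inv] at h
  rw [← sub_eq_add_neg] at hbernoulli
  linarith

theorem half_sub_sqrt_div_two_le {x y δ : ℝ} (hx : 0 ≤ x) (hxy : x + y ≤ 1)
    (h : 1 - δ ≤ 4 * (x * y)) : 1 / 2 - √δ / 2 ≤ x := by
  have hsq : (1 - 2 * x) ^ 2 ≤ δ := by
    nlinarith [mul_le_mul_of_nonneg_left (by linarith : y ≤ 1 - x) hx]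
  linarith [le_abs_self (1 - 2 * x), abs_le_sqrt hsq]

theorem sq_sum_le_card_mul_sum_sum_ite_eq {V α : Type*} [Fintype V] [Fintype α] [DecidableEq α]
    (C : V → α) (u : V → ℝ) :
    (∑ i, u i) ^ 2 ≤ Fintype.card α * ∑ i, ∑ j, if C i = C j then u i * u j else 0 := by
  have hfiber : ∑ i, ∑ j, (if C i = C j then u i * u j else 0) =
      ∑ k, (∑ i with C i = k, u i) ^ 2 := by
    simp_rw [sq, sum_mul_sum, ← sum_fiberwise univ C (fun i => ∑ j, _)]
    refine sum_congr rfl fun k _ => sum_congr rfl fun i hi => ?_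
    rw [(mem_filter.1 hi).2, ← sum_fiberwise univ C (fun j => _), sum_eq_single k]
    · exact sum_congr rfl fun j hj => by simp [(mem_filter.1 hj).2]
    · intro l _ hl
      exact sum_eq_zero fun j hj => by simp [(mem_filter.1 hj).2, Ne.symm hl]
    · simp
  rw [hfiber, ← sum_fiberwise univ C u]
  exact sq_sum_le_card_mul_sum_sq

namespace SimpleGraph

variable {V : Type*} [Fintype V] {G : SimpleGraph V} [DecidableRel G.Adj]

/-- Adjacent vertices get different colours; Cauchy–Schwarz over the colour classes bounds the
sum over equally coloured pairs from below. -/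
theorem Coloring.sum_sum_adj_mul_le {α : Type*} [Fintype α] (C : G.Coloring α) {u : V → ℝ}
    (hu : ∀ i, 0 ≤ u i) :
    ∑ i, ∑ j, (if G.Adj i j then u i * u j else 0) ≤
      (1 - 1 / Fintype.card α) * (∑ i, u i) ^ 2 := by
  classical
  set same := ∑ i, ∑ j, if C i = C j then u i * u j else 0
  have hsame : (∑ i, u i) ^ 2 / Fintype.card α ≤ same :=
    div_le_of_le_mul₀ (Nat.cast_nonneg _)
      (sum_nonneg fun i _ => sum_nonneg fun j _ => by
        split_ifs; exacts [mul_nonneg (hu i) (hu j), le_rfl])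
      (by rw [mul_comm]; exact sq_sum_le_card_mul_sum_sum_ite_eq C u)
  have hterm : ∀ i j, (if G.Adj i j then u i * u j else 0) ≤
      u i * u j - if C i = C j then u i * u j else 0 := by
    intro i j
    by_cases h : G.Adj i j
    · simp [h, C.valid h]
    · have := mul_nonneg (hu i) (hu j)
      split_ifs <;> linarith
  calc ∑ i, ∑ j, (if G.Adj i j then u i * u j else 0)
      ≤ ∑ i, ∑ j, (u i * u j - if C i = C j then u i * u j else 0) :=
        sum_le_sum fun i _ => sum_le_sum fun j _ => hterm i j
    _ = (∑ i, u i) ^ 2 - same := by simp only [sum_sub_distrib, sq, sum_mul_sum, same]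
    _ ≤ _ := by rw [sub_mul, one_mul, div_mul_eq_mul_div, one_mul]; linarith

theorem IsAcyclic.sum_sum_adj_mul_le (hG : G.IsAcyclic) {u : V → ℝ} (hu : ∀ i, 0 ≤ u i) :
    ∑ i, ∑ j, (if G.Adj i j then u i * u j else 0) ≤ (∑ i, u i) ^ 2 / 2 := by
  have := hG.coloringTwo.sum_sum_adj_mul_le hu
  norm_num at this
  linarith

theorem exists_adj_of_sum_sum_ite_ne_zero {f : V → V → ℝ}
    (h : ∑ i, ∑ j, (if G.Adj i j then f i j else 0) ≠ 0) : ∃ i j, G.Adj i j := by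
  obtain ⟨i, -, hi⟩ := exists_ne_zero_of_sum_ne_zero h
  obtain ⟨j, -, hj⟩ := exists_ne_zero_of_sum_ne_zero hi
  exact ⟨i, j, by_contra fun hij => hj (if_neg hij)⟩

theorem exists_adj_forall_adj_le {β : Type*} [LinearOrder β] (h : ∃ i j, G.Adj i j)
    (f : V → V → β) : ∃ i j, G.Adj i j ∧ ∀ a b, G.Adj a b → f a b ≤ f i j := by
  obtain ⟨i, j, hij⟩ := h
  obtain ⟨⟨i, j⟩, hmem, hmax⟩ := exists_max_image ({q : V × V | G.Adj q.1 q.2} : Finset _)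
    (fun q => f q.1 q.2) ⟨(i, j), by simpa using hij⟩
  exact ⟨i, j, by simpa using hmem, fun a b hab => hmax (a, b) (by simpa using hab)⟩

theorem sum_sum_adj_rpow_le {u : V → ℝ} (hu : ∀ i, 0 ≤ u i) {γ P : ℝ} (hγ : 1 ≤ γ)
    (hP : ∀ a b, G.Adj a b → u a * u b ≤ P) :
    ∑ i, ∑ j, (if G.Adj i j then u i ^ γ * u j ^ γ else 0) ≤
      P ^ (γ - 1) * ∑ i, ∑ j, (if G.Adj i j then u i * u j else 0) := by
  simp_rw [mul_sum]
  refine sum_le_sum fun i _ => sum_le_sum fun j _ => ?_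
  split_ifs with hij
  · rw [← mul_rpow (hu i) (hu j)]
    exact rpow_le_rpow_sub_one_mul (mul_nonneg (hu i) (hu j)) (hP i j hij) hγ
  · simp

end SimpleGraph

/-- **Structure of near-maximizers of the tree variational problem, `γ > 1`.** -/
theorem tree_variational_near_maximizer
    (γ : ℝ) (hγ : 1 < γ) :
    ∃ c : ℝ, 0 < c ∧ ∃ ε₀ : ℝ, 0 < ε₀ ∧
      ∀ ε : ℝ, 0 < ε → ε ≤ ε₀ →
      ∀ (m : ℕ) (T : SimpleGraph (Fin m)), T.IsTree →
      ∀ u : Fin m → ℝ, (∀ i, 0 ≤ u i) → (∑ i, u i) = 1 →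
        (1 - ε) * (2 : ℝ) ^ (1 / (2 * γ) - 1) ≤
          (2 * edgeSum T (fun i j => u i ^ γ * u j ^ γ)) ^ (1 / (2 * γ)) →
        ∃ i j, T.Adj i j ∧
          1 / 2 - c * Real.sqrt ε ≤ u i ∧ 1 / 2 - c * Real.sqrt ε ≤ u j := by
  classical
  have hγ1 : 0 < γ - 1 := by linarith
  refine ⟨√(2 * γ / (γ - 1)) / 2, by positivity, 1 / 2, by norm_num, ?_⟩
  intro ε _ hε m T hT u hu hsum hyp
  set S := ∑ i, ∑ j, if T.Adj i j then u i ^ γ * u j ^ γ else 0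
  have hS : 2 * edgeSum T (fun i j => u i ^ γ * u j ^ γ) = S := by rw [edgeSum]; ring
  rw [hS] at hyp
  have hS0 : 0 ≤ S := sum_nonneg fun i _ => sum_nonneg fun j _ => by
    split_ifs; exacts [mul_nonneg (rpow_nonneg (hu i) γ) (rpow_nonneg (hu j) γ), le_rfl]
  have hSne : S ≠ 0 := by
    intro h
    rw [h, zero_rpow (by positivity)] at hyp
    linarith [mul_pos (by linarith : (0 : ℝ) < 1 - ε) (rpow_pos_of_pos two_pos (1 / (2 * γ) - 1))]
  obtain ⟨i, j, hij, hmax⟩ := SimpleGraph.exists_adj_forall_adj_le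
    (SimpleGraph.exists_adj_of_sum_sum_ite_ne_zero hSne) (fun a b => u a * u b)
  have hP : 0 ≤ u i * u j := mul_nonneg (hu i) (hu j)
  have hSP : S ≤ (u i * u j) ^ (γ - 1) / 2 := by
    have htree := hT.isAcyclic.sum_sum_adj_mul_le hu
    rw [hsum] at htree
    calc S ≤ _ := SimpleGraph.sum_sum_adj_rpow_le hu hγ.le hmax
      _ ≤ (u i * u j) ^ (γ - 1) * (1 ^ 2 / 2) :=
        mul_le_mul_of_nonneg_left htree (rpow_nonneg hP _)
      _ = _ := by ring
  have hprod : 1 - 2 * γ / (γ - 1) * ε ≤ 4 * (u i * u j) :=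
    one_sub_mul_le_of_rpow_le_rpow hγ (by linarith) (by positivity)
      (rpow_le_four_mul_rpow_of_le_rpow (by linarith) (by linarith) hP hS0 hSP hyp)
  have hpair : u i + u j ≤ 1 := hsum ▸ add_le_sum (fun k _ => hu k) (mem_univ i) (mem_univ j) hij.ne
  rw [show √(2 * γ / (γ - 1)) / 2 * √ε = √(2 * γ / (γ - 1) * ε) / 2 by
    rw [sqrt_mul (by positivity)]; ring]
  exact ⟨i, j, hij, half_sub_sqrt_div_two_le (hu i) hpair hprod,
    half_sub_sqrt_div_two_le (hu j) (by rwa [add_comm]) (by rwa [mul_comm (u j)])⟩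

end
end

section
/- Shattering effect of sparse percolation on bounded-degree graphs: let C > 0 and d ∈ ℕ be constants and let (b_n)_{n≥1} be a sequence of positive reals with b_n / log log n → ∞. For each n, let G_n be any graph on n vertices whose maximum degree is at most d, and perform independent bond percolation on G_n with connection probability p_n ≤ C·e^{−b_n} (each edge retained independently with probability p_n), yielding the random subgraph G'_n of retained edges. Then for all sufficiently large n, with probability at least 1 − n^{−1}, every connected component of G'_n has at most ⌊3·log n / b_n⌋ edges. -/
open MeasureTheory ProbabilityTheory Filter Real
open scoped ENNReal NNReal

noncomputable section

/-! If the component of `v` in `G'` has at least `m = ⌊3 log n / b n⌋ + 1` edges, then,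
starting from the empty walk at `v` and repeatedly splicing in a detour `a → c → a` along a
component edge `{a, c}` not yet traversed, one finds a walk of length `2m` from `v` traversing
exactly `m` distinct edges. Its edge set is one of the at most `d^(2m)` edge sets of length-`2m`
walks from `v` in `G`, and is retained with probability `p^m`. A union bound over these sets and
over `v` bounds the failure probability by `n ((d+1)^2 C e^(-b n))^m`, which is at most `n⁻¹` as
soon as `b n` is large. -/

theorem MaxDegLE.degree_le {m : ℕ} {G : SimpleGraph (Fin m)} [G.LocallyFinite] {d : ℕ}
    (h : MaxDegLE G d) (v : Fin m) : G.degree v ≤ d := by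
  rw [← SimpleGraph.card_neighborFinset_eq_degree, SimpleGraph.neighborFinset,
    ← Set.ncard_eq_toFinset_card']
  exact h v

namespace SimpleGraph

variable {V : Type*}

def componentEdgeSet (G : SimpleGraph V) (v : V) : Set (Sym2 V) :=
  {e ∈ G.edgeSet | ∀ u ∈ e, G.Reachable v u}

section Walks

variable {G : SimpleGraph V}

namespace Walk

variable {u x : V}

theorem exists_length_eq_edges_toFinset_eq_insert [DecidableEq V] (q : G.Walk u x) {a c : V}
    (ha : a ∈ q.support) (hac : G.Adj a c) :
    ∃ q' : G.Walk u x, q'.length = q.length + 2 ∧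
      q'.edges.toFinset = insert s(a, c) q.edges.toFinset := by
  refine ⟨(q.takeUntil a ha).append (cons hac (cons hac.symm (q.dropUntil a ha))), ?_, ?_⟩
  · conv_rhs => rw [← q.take_spec ha]
    simp only [length_append, length_cons]
    omega
  · conv_rhs => rw [← q.take_spec ha]
    ext e
    simp only [edges_append, edges_cons, Sym2.eq_swap (a := c), List.mem_toFinset,
      Finset.mem_insert, List.mem_append, List.mem_cons]
    tauto

theorem exists_adj_mem_support_notMem_edges (q : G.Walk u x) :
    ∀ {y z : V} (r : G.Walk y z), y ∈ q.support → (∃ e ∈ r.edges, e ∉ q.edges) →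
      ∃ a c, G.Adj a c ∧ a ∈ q.support ∧ s(a, c) ∉ q.edges
  | _, _, nil, _, ⟨_, he, _⟩ => by simp at he
  | y, _, cons (v := c) hyc r, hy, ⟨e, he, heq⟩ => by
    by_cases hold : s(y, c) ∈ q.edges
    · refine q.exists_adj_mem_support_notMem_edges r (q.snd_mem_support_of_mem_edges hold)
        ⟨e, ?_, heq⟩
      rw [edges_cons, List.mem_cons] at he
      exact he.resolve_left (by rintro rfl; exact heq hold)
    · exact ⟨y, c, hyc, hy, hold⟩

end Walk

theorem exists_adj_mem_support_notMem_edges_of_mem_componentEdgeSet {v x : V}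
    (q : G.Walk v x) {e : Sym2 V} (he : e ∈ G.componentEdgeSet v) (heq : e ∉ q.edges) :
    ∃ a c, G.Adj a c ∧ a ∈ q.support ∧ s(a, c) ∉ q.edges := by
  induction e with
  | h a b =>
    obtain ⟨hab, hreach⟩ := he
    have hab : G.Adj a b := hab
    obtain ⟨r⟩ := hreach a (Sym2.mem_mk_left a b)
    exact q.exists_adj_mem_support_notMem_edges (r.concat hab) q.start_mem_support
      ⟨s(a, b), by simp [Walk.edges_concat], heq⟩

theorem exists_walk_length_eq_card_edges_eq [DecidableEq V] (v : V) :
    ∀ m, m ≤ (G.componentEdgeSet v).ncard →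
      ∃ x, ∃ q : G.Walk v x, q.length = 2 * m ∧ q.edges.toFinset.card = m
  | 0, _ => ⟨v, .nil, rfl, rfl⟩
  | m + 1, hm => by
    obtain ⟨x, q, hlen, hcard⟩ := exists_walk_length_eq_card_edges_eq v m (by omega)
    obtain ⟨e, he, heq⟩ : ∃ e ∈ G.componentEdgeSet v, e ∉ q.edges := by
      by_contra! h
      have := Set.ncard_le_ncard (t := (q.edges.toFinset : Set (Sym2 V)))
        (fun e he => List.mem_toFinset.mpr (h e he))
      rw [Set.ncard_coe_finset] at this
      omega
    obtain ⟨a, c, hac, ha, hnew⟩ :=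
      exists_adj_mem_support_notMem_edges_of_mem_componentEdgeSet q he heq
    obtain ⟨q', hlen', hedges'⟩ := q.exists_length_eq_edges_toFinset_eq_insert ha hac
    refine ⟨x, q', by omega, ?_⟩
    rw [hedges', Finset.card_insert_of_notMem (by simpa using hnew), hcard]

end Walks

section WalkEdgeFinsets

variable [DecidableEq V] (G : SimpleGraph V) [G.LocallyFinite]

def walkEdgeFinsets : ℕ → V → Finset (Finset (Sym2 V))
  | 0, _ => {∅}
  | L + 1, v => (G.neighborFinset v).biUnion fun y => (walkEdgeFinsets L y).image (insert s(v, y))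

variable {G}

theorem card_walkEdgeFinsets_le {d : ℕ} (hdeg : ∀ v, G.degree v ≤ d) :
    ∀ L v, (G.walkEdgeFinsets L v).card ≤ d ^ L
  | 0, _ => by simp [walkEdgeFinsets]
  | L + 1, v => calc
    _ ≤ ∑ y ∈ G.neighborFinset v, ((G.walkEdgeFinsets L y).image (insert s(v, y))).card :=
      Finset.card_biUnion_le
    _ ≤ ∑ _y ∈ G.neighborFinset v, d ^ L :=
      Finset.sum_le_sum fun y _ => Finset.card_image_le.trans (card_walkEdgeFinsets_le hdeg L y)
    _ ≤ d * d ^ L := by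
      rw [Finset.sum_const, smul_eq_mul, card_neighborFinset_eq_degree]
      exact Nat.mul_le_mul_right _ (hdeg v)
    _ = d ^ (L + 1) := (pow_succ' d L).symm

theorem Walk.edges_toFinset_mem_walkEdgeFinsets {v x : V} :
    ∀ q : G.Walk v x, q.edges.toFinset ∈ G.walkEdgeFinsets q.length v
  | .nil => by simp [walkEdgeFinsets]
  | .cons (v := y) h q => by
    rw [edges_cons, List.toFinset_cons, length_cons, walkEdgeFinsets]
    exact Finset.mem_biUnion.mpr ⟨y, (mem_neighborFinset _ _ _).mpr h,
      Finset.mem_image_of_mem _ q.edges_toFinset_mem_walkEdgeFinsets⟩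

theorem coe_subset_edgeSet_of_mem_walkEdgeFinsets :
    ∀ {L v} {F : Finset (Sym2 V)}, F ∈ G.walkEdgeFinsets L v → ↑F ⊆ G.edgeSet
  | 0, _, F, hF => by simp_all [walkEdgeFinsets]
  | L + 1, v, F, hF => by
    obtain ⟨y, hy, F', hF', rfl⟩ := by simpa [walkEdgeFinsets] using hF
    rw [Finset.coe_insert, Set.insert_subset_iff]
    exact ⟨hy, coe_subset_edgeSet_of_mem_walkEdgeFinsets hF'⟩

end WalkEdgeFinsets

variable {Ω : Type*} [MeasurableSpace Ω]

structure IsBondPercolation (P : Measure Ω) (G : SimpleGraph V) (G' : Ω → SimpleGraph V)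
    (p : ℝ) : Prop where
  le : ∀ ω, G' ω ≤ G
  measure_mem_edgeSet : ∀ e ∈ G.edgeSet, P {ω | e ∈ (G' ω).edgeSet} = ENNReal.ofReal p
  iIndepFun_mem_edgeSet :
    iIndepFun (fun (e : G.edgeSet) (ω : Ω) => (e.1 ∈ (G' ω).edgeSet : Prop)) P

namespace IsBondPercolation

variable {P : Measure Ω} {G : SimpleGraph V} {G' : Ω → SimpleGraph V} {p : ℝ}

theorem measure_forall_mem_edgeSet (h : IsBondPercolation P G G' p) {F : Finset (Sym2 V)}
    (hF : ↑F ⊆ G.edgeSet) :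
    P {ω | ∀ e ∈ F, e ∈ (G' ω).edgeSet} = ENNReal.ofReal p ^ F.card := by
  classical
  have hset : {ω | ∀ e ∈ F, e ∈ (G' ω).edgeSet} =
      ⋂ e ∈ F.subtype (· ∈ G.edgeSet), {ω | e.1 ∈ (G' ω).edgeSet} := by
    ext ω
    simp only [Set.mem_ofPred_eq, Set.mem_iInter, Finset.mem_subtype, Subtype.forall]
    exact ⟨fun hω e _ he => hω e he, fun hω e he => hω e (hF he) he⟩
  rw [hset, h.iIndepFun_mem_edgeSet.meas_biInter (s := fun e => {ω | e.1 ∈ (G' ω).edgeSet})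
      fun _ _ => ⟨{x | x}, trivial, rfl⟩,
    Finset.prod_congr rfl fun e _ => h.measure_mem_edgeSet e.1 e.2, Finset.prod_const,
    Finset.card_subtype, Finset.filter_true_of_mem fun e he => hF he]

theorem measure_le_ncard_componentEdgeSet_le [G.LocallyFinite] (h : IsBondPercolation P G G' p)
    {d : ℕ} (hdeg : ∀ v, G.degree v ≤ d) (v : V) (m : ℕ) :
    P {ω | m ≤ ((G' ω).componentEdgeSet v).ncard} ≤
      (d : ℝ≥0∞) ^ (2 * m) * ENNReal.ofReal p ^ m := by
  classical
  let Fs := (G.walkEdgeFinsets (2 * m) v).filter (·.card = m)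
  have hcover : {ω | m ≤ ((G' ω).componentEdgeSet v).ncard} ⊆
      ⋃ F ∈ Fs, {ω | ∀ e ∈ F, e ∈ (G' ω).edgeSet} := by
    intro ω hω
    obtain ⟨x, q, hlen, hcard⟩ := exists_walk_length_eq_card_edges_eq v m hω
    refine Set.mem_biUnion (x := q.edges.toFinset) (Finset.mem_filter.mpr ⟨?_, hcard⟩)
      fun e he => ?_
    · simpa only [Walk.edges_mapLe_eq_edges, Walk.length_mapLe, hlen] using
        (q.mapLe (h.le ω)).edges_toFinset_mem_walkEdgeFinsets
    · exact q.edges_subset_edgeSet (List.mem_toFinset.mp he)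
  calc _ ≤ ∑ F ∈ Fs, P {ω | ∀ e ∈ F, e ∈ (G' ω).edgeSet} :=
        (measure_mono hcover).trans (measure_biUnion_finset_le _ _)
    _ = ∑ _F ∈ Fs, ENNReal.ofReal p ^ m := Finset.sum_congr rfl fun F hF => by
        rw [Finset.mem_filter] at hF
        rw [h.measure_forall_mem_edgeSet (coe_subset_edgeSet_of_mem_walkEdgeFinsets hF.1), hF.2]
    _ ≤ _ := by
        rw [Finset.sum_const, nsmul_eq_mul]
        gcongr
        exact_mod_cast (Finset.card_filter_le _ _).trans (card_walkEdgeFinsets_le hdeg _ v)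

theorem measure_exists_le_ncard_componentEdgeSet_le [Fintype V] [G.LocallyFinite]
    (h : IsBondPercolation P G G' p) {d : ℕ} (hdeg : ∀ v, G.degree v ≤ d) (m : ℕ) :
    P {ω | ∃ v, m ≤ ((G' ω).componentEdgeSet v).ncard} ≤
      Fintype.card V * ((d : ℝ≥0∞) ^ (2 * m) * ENNReal.ofReal p ^ m) := by
  rw [Set.ofPred_exists]
  refine (measure_iUnion_fintype_le P _).trans ?_
  simpa using Finset.sum_le_sum fun v (_ : v ∈ Finset.univ) =>
    h.measure_le_ncard_componentEdgeSet_le hdeg v m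

end IsBondPercolation

end SimpleGraph

theorem Filter.Tendsto.atTop_of_div_atTop {α : Type*} {l : Filter α} {f g : α → ℝ}
    (hfg : Tendsto (fun x => f x / g x) l atTop) (hg : Tendsto g l atTop) :
    Tendsto f l atTop :=
  (hfg.atTop_mul_atTop₀ hg).congr' <| (hg.eventually_gt_atTop 0).mono fun _ hx =>
    div_mul_cancel₀ _ hx.ne'

theorem eventually_natCast_mul_pow_le_inv {b : ℕ → ℝ} (hb : Tendsto b atTop atTop) {K : ℝ}
    (hK : 0 < K) :
    ∀ᶠ n : ℕ in atTop,
      (n : ℝ) * (K * exp (-b n)) ^ (⌊3 * log n / b n⌋₊ + 1) ≤ (n : ℝ)⁻¹ := by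
  filter_upwards [hb.eventually_gt_atTop 0, hb.eventually_ge_atTop (3 * log K),
    eventually_gt_atTop 0] with n hb0 hbK hn
  set m := ⌊3 * log n / b n⌋₊ + 1
  have hm : 3 * log n < m * b n := by
    rw [← div_lt_iff₀ hb0]
    exact_mod_cast Nat.lt_floor_add_one (3 * log n / b n)
  -- `log K ≤ b n / 3` gives `m (b n - log K) ≥ 2 m b n / 3 > 2 log n`.
  have hexponent : log n + m * (log K - b n) ≤ -log n := by
    nlinarith [m.cast_nonneg (α := ℝ)]
  have hn' : (0 : ℝ) < n := by exact_mod_cast hn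
  calc (n : ℝ) * (K * exp (-b n)) ^ m = exp (log n + m * (log K - b n)) := by
        rw [exp_add, exp_log hn', exp_nat_mul, exp_sub, exp_log hK, exp_neg, div_eq_mul_inv]
    _ ≤ exp (-log n) := exp_le_exp.mpr hexponent
    _ = (n : ℝ)⁻¹ := by rw [exp_neg, exp_log hn']

theorem ENNReal.natCast_mul_pow_mul_ofReal_pow_le {n d m : ℕ} {p r : ℝ} (hp : p ≤ r)
    (hr : 0 ≤ r) :
    (n : ℝ≥0∞) * ((d : ℝ≥0∞) ^ (2 * m) * ENNReal.ofReal p ^ m) ≤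
      ENNReal.ofReal (n * ((d + 1) ^ 2 * r) ^ m) := by
  rw [ENNReal.ofReal_mul (by positivity), ENNReal.ofReal_pow (by positivity),
    ENNReal.ofReal_mul (by positivity), ENNReal.ofReal_pow (by positivity),
    ENNReal.ofReal_add (by positivity) zero_le_one, ENNReal.ofReal_natCast,
    ENNReal.ofReal_natCast, ENNReal.ofReal_one, pow_mul, ← mul_pow]
  gcongr
  exact le_self_add

theorem MeasureTheory.one_sub_le_prob_compl {Ω : Type*} [MeasurableSpace Ω] {μ : Measure Ω}
    [IsProbabilityMeasure μ] (s : Set Ω) : 1 - μ s ≤ μ sᶜ := by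
  simpa [Set.compl_eq_univ_sdiff] using le_measure_sdiff (μ := μ) (s₁ := Set.univ) (s₂ := s)

theorem percolation_shattering_general
    (C : ℝ) (hC : 0 < C) (d : ℕ)
    (b : ℕ → ℝ)
    (hbtop : Tendsto (fun n => b n / Real.log (Real.log n)) atTop atTop)
    (G : ∀ n : ℕ, SimpleGraph (Fin n)) (hdeg : ∀ n, MaxDegLE (G n) d)
    (p : ℕ → ℝ) (hp : ∀ n, p n ≤ C * Real.exp (-b n))
    (Ω : ℕ → Type*) [∀ n, MeasurableSpace (Ω n)]
    (P : ∀ n, Measure (Ω n)) [∀ n, IsProbabilityMeasure (P n)]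
    (G' : ∀ n, Ω n → SimpleGraph (Fin n))
    (hsub : ∀ n ω, G' n ω ≤ G n)
    (hmarg : ∀ n, ∀ e ∈ (G n).edgeSet,
      P n {ω | e ∈ (G' n ω).edgeSet} = ENNReal.ofReal (p n))
    (hindep : ∀ n, iIndepFun
      (fun (e : (G n).edgeSet) (ω : Ω n) => (e.1 ∈ (G' n ω).edgeSet : Prop)) (P n)) :
    ∀ᶠ n : ℕ in atTop,
      1 - ((n : ℕ) : ℝ≥0∞)⁻¹ ≤
        P n {ω | ∀ v : Fin n,
          ({e ∈ (G' n ω).edgeSet | ∀ u ∈ e, (G' n ω).Reachable v u}).ncard ≤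
            ⌊3 * Real.log n / b n⌋₊} := by
  classical
  have hb : Tendsto b atTop atTop := hbtop.atTop_of_div_atTop
    (tendsto_log_atTop.comp (tendsto_log_atTop.comp tendsto_natCast_atTop_atTop))
  filter_upwards [eventually_natCast_mul_pow_le_inv hb (K := (d + 1) ^ 2 * C) (by positivity),
    eventually_gt_atTop 0] with n hn hn0
  set m := ⌊3 * log n / b n⌋₊ + 1
  set bad := {ω | ∃ v, m ≤ ((G' n ω).componentEdgeSet v).ncard}
  have hbad : P n bad ≤ (n : ℝ≥0∞)⁻¹ := calc
    _ ≤ n * ((d : ℝ≥0∞) ^ (2 * m) * ENNReal.ofReal (p n) ^ m) := by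
      simpa using SimpleGraph.IsBondPercolation.measure_exists_le_ncard_componentEdgeSet_le
        ⟨hsub n, hmarg n, hindep n⟩ (hdeg n).degree_le m
    _ ≤ ENNReal.ofReal (n * ((d + 1) ^ 2 * (C * exp (-b n))) ^ m) :=
      ENNReal.natCast_mul_pow_mul_ofReal_pow_le (hp n) (by positivity)
    _ ≤ ENNReal.ofReal (n : ℝ)⁻¹ := ENNReal.ofReal_le_ofReal (by rwa [← mul_assoc])
    _ = (n : ℝ≥0∞)⁻¹ := by
      rw [ENNReal.ofReal_inv_of_pos (by exact_mod_cast hn0), ENNReal.ofReal_natCast]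
  calc 1 - (n : ℝ≥0∞)⁻¹ ≤ 1 - P n bad := tsub_le_tsub_left hbad 1
    _ ≤ P n badᶜ := one_sub_le_prob_compl bad
    _ = _ := by
      congr 1
      ext ω
      simp [bad, m, SimpleGraph.componentEdgeSet]

/-- **Shattering effect of sparse percolation on bounded-degree graphs**: after bond
percolation with retention probability `p n ≤ C e^(-b n)` on a graph of maximum degree at
most `d`, with probability at least `1 - n⁻¹` every connected component has at most
`⌊3 log n / b n⌋` edges. -/
theorem percolation_shattering
    (C : ℝ) (hC : 0 < C) (d : ℕ)
    (b : ℕ → ℝ) (hbpos : ∀ n, 0 < b n)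
    (hbtop : Tendsto (fun n => b n / Real.log (Real.log n)) atTop atTop)
    (G : ∀ n : ℕ, SimpleGraph (Fin n)) (hdeg : ∀ n, MaxDegLE (G n) d)
    (p : ℕ → ℝ) (hp0 : ∀ n, 0 ≤ p n) (hp : ∀ n, p n ≤ C * Real.exp (-b n))
    (Ω : ℕ → Type*) [∀ n, MeasurableSpace (Ω n)]
    (P : ∀ n, Measure (Ω n)) [∀ n, IsProbabilityMeasure (P n)]
    (G' : ∀ n, Ω n → SimpleGraph (Fin n))
    (hsub : ∀ n ω, G' n ω ≤ G n)
    (hmarg : ∀ n, ∀ e ∈ (G n).edgeSet,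
      P n {ω | e ∈ (G' n ω).edgeSet} = ENNReal.ofReal (p n))
    (hindep : ∀ n, iIndepFun
      (fun (e : (G n).edgeSet) (ω : Ω n) => (e.1 ∈ (G' n ω).edgeSet : Prop)) (P n)) :
    ∀ᶠ n : ℕ in atTop,
      1 - ((n : ℕ) : ℝ≥0∞)⁻¹ ≤
        P n {ω | ∀ v : Fin n,
          ({e ∈ (G' n ω).edgeSet | ∀ u ∈ e, (G' n ω).Reachable v u}).ncard ≤
            ⌊3 * Real.log n / b n⌋₊} :=
  percolation_shattering_general C hC d b hbtop G hdeg p hp Ω P G' hsub hmarg hindep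
end
end

section
/- Star-graph evaluation of the variational functional and the phase transition inequality: fix an integer d ≥ 3 and α > 2. Then the supremum, over all vectors (u_0, u_1, …, u_d) with u_i ≥ 0 and u_0 + u_1 + ⋯ + u_d = 1, of 2·(Σ_{i=1}^{d} (u_0 u_i)^{α/(2(α−1))})^{(α−1)/α} equals d^{(α−2)/(2α)}; the supremum is attained at u_0 = 1/2 and u_1 = ⋯ = u_d = 1/(2d). Consequently h_d(α) ≥ d^{(α−2)/(2α)} > 1. -/
open MeasureTheory ProbabilityTheory Filter Real
open scoped ENNReal NNReal

noncomputable section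

/-- The set of values of the variational functional defining `h_d(α)`, taken over all
finite trees of maximum degree at most `d` and all nonnegative `ℓ¹`-normalized vectors. -/
def hSet (d : ℕ) (α : ℝ) : Set ℝ :=
  {x | ∃ (m : ℕ) (G : SimpleGraph (Fin m)) (u : Fin m → ℝ),
    G.IsTree ∧ MaxDegLE G d ∧ (∀ i, 0 ≤ u i) ∧ (∑ i, u i) = 1 ∧
    x = (edgeSum G (fun i j => (u i * u j) ^ (α / (2 * (α - 1))))) ^ ((α - 1) / α)}

/-- The law-of-large-numbers constant `h_d(α)`. -/
def hFun (d : ℕ) (α : ℝ) : ℝ := 2 * sSup (hSet d α)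


/-! With `β = α / (2(α - 1)) ∈ (1/2, 1]`, the map `x ↦ x ^ β` is concave, so on the star Jensen's
inequality bounds `∑ (u₀ uᵢ) ^ β` by `d (u₀ S / d) ^ β`, where `S = 1 - u₀` is the leaf mass and
`u₀ S ≤ 1/4`; equality holds at `u₀ = 1/2`, `uᵢ = 1/(2d)`. The star is a tree of maximum degree
`d`, and the functional is bounded on all such trees because `(uᵢ uⱼ) ^ β ≤ uᵢ + uⱼ` for
`β ≥ 1/2`, so the edge sum is at most `d ∑ uᵢ = d`. -/

open Finset

theorem sum_rpow_le_card_mul_rpow_mean {ι : Type*} (s : Finset ι) {f : ι → ℝ}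
    (hf : ∀ i ∈ s, 0 ≤ f i) {p : ℝ} (hp₀ : 0 ≤ p) (hp₁ : p ≤ 1) :
    ∑ i ∈ s, f i ^ p ≤ #s * ((∑ i ∈ s, f i) / (#s : ℝ)) ^ p := by
  rcases s.eq_empty_or_nonempty with rfl | hs
  · simp
  have hcard : (0 : ℝ) < #s := by exact_mod_cast hs.card_pos
  have jensen := (Real.concaveOn_rpow hp₀ hp₁).le_map_sum (t := s) (w := fun _ => (#s : ℝ)⁻¹)
    (p := f) (fun _ _ => by positivity) (by simp [hcard.ne']) hf
  simp only [smul_eq_mul, ← mul_sum] at jensen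
  rw [inv_mul_eq_div, div_le_iff₀ hcard, inv_mul_eq_div] at jensen
  linarith

theorem sum_mul_rpow_le_of_add_sum_eq_one {ι : Type*} (s : Finset ι) {a : ℝ} {v : ι → ℝ}
    (ha : 0 ≤ a) (hv : ∀ i ∈ s, 0 ≤ v i) (hsum : a + ∑ i ∈ s, v i = 1) {p : ℝ} (hp₀ : 0 ≤ p)
    (hp₁ : p ≤ 1) :
    ∑ i ∈ s, (a * v i) ^ p ≤ #s * (4 * (#s : ℝ))⁻¹ ^ p := by
  have hS : 0 ≤ ∑ i ∈ s, v i := sum_nonneg hv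
  -- `4 a S ≤ (a + S)² = 1`
  have hprod : a * ∑ i ∈ s, v i ≤ 1 / 4 := by nlinarith [sq_nonneg (a - ∑ i ∈ s, v i)]
  calc ∑ i ∈ s, (a * v i) ^ p
      ≤ #s * ((∑ i ∈ s, a * v i) / (#s : ℝ)) ^ p :=
        sum_rpow_le_card_mul_rpow_mean s (fun i hi => mul_nonneg ha (hv i hi)) hp₀ hp₁
    _ ≤ #s * (4 * (#s : ℝ))⁻¹ ^ p := by
        gcongr
        · exact div_nonneg (sum_nonneg fun i hi => mul_nonneg ha (hv i hi)) (by positivity)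
        · rw [← mul_sum, mul_inv, div_eq_mul_inv]
          gcongr
          linarith

theorem two_mul_card_mul_rpow_inv_four_mul {d α : ℝ} (hd : 0 < d) (hα : 1 < α) :
    2 * (d * (4 * d)⁻¹ ^ (α / (2 * (α - 1)))) ^ ((α - 1) / α) = d ^ ((α - 2) / (2 * α)) := by
  have hα₀ : α ≠ 0 := by positivity
  have hα₁ : α - 1 ≠ 0 := by linarith
  have hexp : α / (2 * (α - 1)) * ((α - 1) / α) = 1 / 2 := by field_simp
  have hsqrt4 : (4 : ℝ) ^ (1 / 2 : ℝ) = 2 := by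
    rw [show (4 : ℝ) = 2 ^ (2 : ℝ) by norm_num, ← Real.rpow_mul (by norm_num)]
    norm_num
  rw [Real.mul_rpow hd.le (by positivity), ← Real.rpow_mul (by positivity), hexp,
    Real.inv_rpow (by positivity), Real.mul_rpow (by norm_num) hd.le, hsqrt4,
    show (α - 2) / (2 * α) = (α - 1) / α - 1 / 2 by field_simp; ring, Real.rpow_sub hd]
  field_simp

theorem rpow_mul_le_add {x y p : ℝ} (hx : 0 ≤ x) (hy : 0 ≤ y) (hx₁ : x ≤ 1) (hy₁ : y ≤ 1)
    (hp : 1 / 2 ≤ p) : (x * y) ^ p ≤ x + y := by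
  calc (x * y) ^ p ≤ (x * y) ^ (1 / 2 : ℝ) :=
        Real.rpow_le_rpow_of_exponent_ge' (by positivity) (by nlinarith) (by norm_num) hp
    _ = x ^ (1 / 2 : ℝ) * y ^ (1 / 2 : ℝ) := Real.mul_rpow hx hy
    _ ≤ 1 / 2 * x + 1 / 2 * y :=
        Real.geom_mean_le_arith_mean2_weighted (by norm_num) (by norm_num) hx hy (by norm_num)
    _ ≤ x + y := by linarith

namespace SimpleGraph

variable {m : ℕ} {G : SimpleGraph (Fin m)}

theorem maxDegLE_iff_degree_le [DecidableRel G.Adj] {d : ℕ} :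
    MaxDegLE G d ↔ ∀ v, G.degree v ≤ d := by
  simp only [MaxDegLE, ← card_neighborSet_eq_degree, ← Nat.card_eq_fintype_card,
    Nat.card_coe_set_eq]
  rfl

theorem maxDegLE_of_fin_succ {d : ℕ} (G : SimpleGraph (Fin (d + 1))) : MaxDegLE G d := by
  classical
  exact maxDegLE_iff_degree_le.2 fun v => Nat.le_of_lt_succ <| by
    simpa using G.degree_lt_card_verts v

theorem edgeSum_nonneg {f : Fin m → Fin m → ℝ} (hf : ∀ i j, G.Adj i j → 0 ≤ f i j) :
    0 ≤ edgeSum G f := by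
  unfold edgeSum
  refine div_nonneg (sum_nonneg fun i _ => sum_nonneg fun j _ => ?_) zero_le_two
  split_ifs with h
  exacts [hf i j h, le_rfl]

theorem edgeSum_le_of_le_add {d : ℕ} (hG : MaxDegLE G d) {f : Fin m → Fin m → ℝ}
    {g : Fin m → ℝ} (hg : ∀ i, 0 ≤ g i) (hfg : ∀ i j, G.Adj i j → f i j ≤ g i + g j) :
    edgeSum G f ≤ d * ∑ i, g i := by
  classical
  have hdeg := maxDegLE_iff_degree_le.1 hG
  have hrow : ∀ i, ∑ j, (if G.Adj i j then g i else 0) = G.degree i * g i := by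
    intro i
    rw [← sum_filter, ← neighborFinset_eq_filter, sum_const, nsmul_eq_mul,
      card_neighborFinset_eq_degree]
  have hcol : ∑ i, ∑ j, (if G.Adj i j then g j else 0) =
      ∑ i, ∑ j, (if G.Adj i j then g i else 0) := by
    rw [sum_comm]
    simp only [G.adj_comm]
  unfold edgeSum
  calc (∑ i, ∑ j, if G.Adj i j then f i j else 0) / 2
      ≤ (∑ i, ∑ j, ((if G.Adj i j then g i else 0) + if G.Adj i j then g j else 0)) / 2 := by
        gcongr with i _ j _
        split_ifs with h
        · exact hfg i j h
        · simp
    _ = ∑ i, G.degree i * g i := by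
        simp only [sum_add_distrib, hcol, hrow]
        ring
    _ ≤ ∑ i, d * g i := by gcongr with i _; exacts [hg i, hdeg i]
    _ = d * ∑ i, g i := (mul_sum ..).symm

theorem edgeSum_starGraph {d : ℕ} (f : Fin (d + 1) → Fin (d + 1) → ℝ)
    (hf : ∀ i j, f i j = f j i) :
    edgeSum (starGraph 0) f = ∑ i : Fin d, f 0 i.succ := by
  simp [edgeSum, Fin.sum_univ_succ, Fin.succ_ne_zero, (Fin.succ_ne_zero _).symm, hf 0]

end SimpleGraph

theorem hSet_bddAbove (d : ℕ) {α : ℝ} (hα : 1 < α) : BddAbove (hSet d α) := by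
  refine ⟨(d : ℝ) ^ ((α - 1) / α), ?_⟩
  rintro _ ⟨m, G, u, -, hG, hu, hsum, rfl⟩
  have hu₁ : ∀ i, u i ≤ 1 := fun i => hsum ▸ single_le_sum (fun j _ => hu j) (mem_univ i)
  have hβ : 1 / 2 ≤ α / (2 * (α - 1)) := by
    rw [div_le_div_iff₀ two_pos (by linarith)]
    linarith
  have hedge : edgeSum G (fun i j => (u i * u j) ^ (α / (2 * (α - 1)))) ≤ d := by
    simpa [hsum] using SimpleGraph.edgeSum_le_of_le_add hG hu
      fun i j _ => rpow_mul_le_add (hu i) (hu j) (hu₁ i) (hu₁ j) hβ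
  exact Real.rpow_le_rpow (SimpleGraph.edgeSum_nonneg fun i j _ =>
    Real.rpow_nonneg (mul_nonneg (hu i) (hu j)) _) hedge
    (div_nonneg (by linarith) (by linarith))

theorem star_functional_le {d : ℕ} (hd : 0 < d) {α : ℝ} (hα : 2 ≤ α) {u : Fin (d + 1) → ℝ}
    (hu : ∀ i, 0 ≤ u i) (hsum : ∑ i, u i = 1) :
    2 * (∑ i : Fin d, (u 0 * u i.succ) ^ (α / (2 * (α - 1)))) ^ ((α - 1) / α) ≤
      (d : ℝ) ^ ((α - 2) / (2 * α)) := by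
  have hβ₁ : α / (2 * (α - 1)) ≤ 1 := by
    rw [div_le_one (by linarith)]
    linarith
  have hbound := sum_mul_rpow_le_of_add_sum_eq_one univ (v := fun i : Fin d => u i.succ) (hu 0)
    (fun i _ => hu i.succ) (by rwa [Fin.sum_univ_succ] at hsum)
    (div_nonneg (by linarith) (by linarith)) hβ₁
  rw [card_univ, Fintype.card_fin] at hbound
  rw [← two_mul_card_mul_rpow_inv_four_mul (by positivity) (by linarith)]
  gcongr
  · exact sum_nonneg fun i _ => Real.rpow_nonneg (mul_nonneg (hu 0) (hu i.succ)) _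
  · exact div_nonneg (by linarith) (by linarith)

/-- **Star-graph evaluation of the variational functional and the phase transition
inequality**, for `α > 2`. -/
theorem star_graph_functional
    (d : ℕ) (hd : 3 ≤ d) (α : ℝ) (hα : 2 < α) :
    IsGreatest {x : ℝ | ∃ u : Fin (d + 1) → ℝ, (∀ i, 0 ≤ u i) ∧ (∑ i, u i) = 1 ∧
        x = 2 * (∑ i : Fin d, (u 0 * u i.succ) ^ (α / (2 * (α - 1)))) ^ ((α - 1) / α)}
      ((d : ℝ) ^ ((α - 2) / (2 * α))) ∧
    2 * (∑ _i : Fin d, ((1 / 2 : ℝ) * (1 / (2 * (d : ℝ)))) ^ (α / (2 * (α - 1)))) ^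
        ((α - 1) / α) = (d : ℝ) ^ ((α - 2) / (2 * α)) ∧
    (d : ℝ) ^ ((α - 2) / (2 * α)) ≤ hFun d α ∧
    1 < (d : ℝ) ^ ((α - 2) / (2 * α)) := by
  have hd₀ : (0 : ℝ) < d := by exact_mod_cast (by omega : 0 < d)
  have hval : 2 * (∑ _i : Fin d, ((1 / 2 : ℝ) * (1 / (2 * (d : ℝ)))) ^ (α / (2 * (α - 1)))) ^
      ((α - 1) / α) = (d : ℝ) ^ ((α - 2) / (2 * α)) := by
    rw [sum_const, card_univ, Fintype.card_fin, nsmul_eq_mul,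
      show (1 / 2 : ℝ) * (1 / (2 * d)) = (4 * (d : ℝ))⁻¹ by field_simp; ring]
    exact two_mul_card_mul_rpow_inv_four_mul hd₀ (by linarith)
  let u : Fin (d + 1) → ℝ := Fin.cons (1 / 2) fun _ => 1 / (2 * d)
  have hu : ∀ i, 0 ≤ u i := Fin.cases (by simp [u]) fun i => by simp [u]
  have hsum : ∑ i, u i = 1 := by
    simp only [u, Fin.sum_cons, sum_const, card_univ, Fintype.card_fin, nsmul_eq_mul]
    field_simp
    ring
  have hstar : (∑ i : Fin d, (u 0 * u i.succ) ^ (α / (2 * (α - 1)))) ^ ((α - 1) / α) ∈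
      hSet d α :=
    ⟨d + 1, .starGraph 0, u, SimpleGraph.isTree_starGraph 0,
      SimpleGraph.maxDegLE_of_fin_succ _, hu, hsum,
      by rw [SimpleGraph.edgeSum_starGraph _ fun i j => by rw [mul_comm]]⟩
  refine ⟨⟨⟨u, hu, hsum, by simpa [u] using hval.symm⟩, ?_⟩, hval, ?_,
    Real.one_lt_rpow (by exact_mod_cast (by omega : 1 < d)) (by apply div_pos <;> linarith)⟩
  · rintro _ ⟨v, hv, hvsum, rfl⟩
    exact star_functional_le (by omega) hα.le hv hvsum
  · rw [hFun, ← hval]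
    simpa [u] using mul_le_mul_of_nonneg_left (le_csSup (hSet_bddAbove d (by linarith)) hstar)
      zero_le_two
end
end
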